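/- arXiv:2103.11964 — 3 statements merged into one kernel-verified Lean document; each statement's English description precedes it below -/
import Mathlib

section
/- Let R ∈ ℝ with R ≠ −2, and set M = (−1 − R)/(1 + R/2)², B = 1 + R/(1 + R/2), and y₀ = −1/(1 + R/2). Then (y₀, y₀) is a fixed point of the generalized Hénon map H_{M,B,R}, and the 2×2 derivative matrix [[0, 1], [−B − R·y₀, −2y₀ − R·y₀]] of H_{M,B,R} at (y₀, y₀) has trace 2 and determinant 1, i.e., its characteristic polynomial is (X − 1)², so both its eigenvalues equal +1. -/
noncomputable def genHenon (M B R : ℝ) : ℝ × ℝ → ℝ × ℝ :=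
  fun p => (p.2, M - B * p.1 - p.2 ^ 2 - R * p.1 * p.2)

open Polynomial

namespace Matrix

theorem charpoly_eq_X_sub_one_sq_of_trace_of_det {R : Type*} [CommRing R] [Nontrivial R]
    {A : Matrix (Fin 2) (Fin 2) R} (htr : A.trace = 2) (hdet : A.det = 1) :
    A.charpoly = (X - C 1) ^ 2 := by
  rw [charpoly_fin_two, htr, hdet, map_ofNat C 2, map_one]
  ring

theorem eq_one_of_mem_spectrum_of_charpoly_eq {n K : Type*} [Fintype n] [DecidableEq n] [Field K]
    {A : Matrix n n K} (hA : A.charpoly = (X - C 1) ^ 2) {μ : K} (hμ : μ ∈ spectrum K A) :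
    μ = 1 := by
  rw [mem_spectrum_iff_isRoot_charpoly, hA, IsRoot, eval_pow, eval_sub, eval_X, eval_C] at hμ
  exact sub_eq_zero.mp (pow_eq_zero_iff two_ne_zero |>.mp hμ)

end Matrix

section BogdanovTakens

variable {R M B y₀ : ℝ}

theorem genHenon_bogdanovTakens_fixedPoint (hR : R ≠ -2)
    (hM : M = (-1 - R) / (1 + R / 2) ^ 2) (hB : B = 1 + R / (1 + R / 2))
    (hy₀ : y₀ = -1 / (1 + R / 2)) :
    genHenon M B R (y₀, y₀) = (y₀, y₀) := by
  have hs : 2 + R ≠ 0 := fun h => hR (by linarith)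
  simp only [genHenon, Prod.mk.injEq, true_and]
  subst hM hB hy₀
  field_simp
  ring

theorem bogdanovTakens_jacobian_eq (hR : R ≠ -2) (hB : B = 1 + R / (1 + R / 2))
    (hy₀ : y₀ = -1 / (1 + R / 2)) :
    !![0, 1; -B - R * y₀, -2 * y₀ - R * y₀] = !![0, 1; -1, 2] := by
  have hs : 2 + R ≠ 0 := fun h => hR (by linarith)
  have h21 : -B - R * y₀ = -1 := by
    subst hB hy₀; field_simp; ring
  have h22 : -2 * y₀ - R * y₀ = 2 := by
    subst hy₀; field_simp; ring
  rw [h21, h22]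

end BogdanovTakens

/-- At the Bogdanov–Takens parameter values `M = (−1−R)/(1+R/2)²`, `B = 1 + R/(1+R/2)`,
the point `(y₀, y₀)` with `y₀ = −1/(1+R/2)` is a fixed point of `H_{M,B,R}`, and the
derivative matrix `[[0, 1], [−B − R·y₀, −2y₀ − R·y₀]]` there has trace `2` and
determinant `1`; its characteristic polynomial is `(X − 1)²`, so both its eigenvalues
equal `+1`. -/
theorem genHenon_bogdanovTakens (R : ℝ) (hR : R ≠ -2)
    (M B y₀ : ℝ) (hM : M = (-1 - R) / (1 + R / 2) ^ 2)
    (hB : B = 1 + R / (1 + R / 2)) (hy₀ : y₀ = -1 / (1 + R / 2)) :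
    genHenon M B R (y₀, y₀) = (y₀, y₀) ∧
    Matrix.trace !![0, 1; -B - R * y₀, -2 * y₀ - R * y₀] = 2 ∧
    Matrix.det !![0, 1; -B - R * y₀, -2 * y₀ - R * y₀] = 1 ∧
    Matrix.charpoly !![0, 1; -B - R * y₀, -2 * y₀ - R * y₀] =
      (Polynomial.X - Polynomial.C 1) ^ 2 ∧
    ∀ μ : ℝ, μ ∈ spectrum ℝ !![0, 1; -B - R * y₀, -2 * y₀ - R * y₀] → μ = 1 := by
  have hJ := bogdanovTakens_jacobian_eq hR hB hy₀
  have htr : Matrix.trace !![0, 1; -B - R * y₀, -2 * y₀ - R * y₀] = 2 := by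
    rw [hJ, Matrix.trace_fin_two_of]; norm_num
  have hdet : Matrix.det !![0, 1; -B - R * y₀, -2 * y₀ - R * y₀] = 1 := by
    rw [hJ, Matrix.det_fin_two_of]; norm_num
  have hchar := Matrix.charpoly_eq_X_sub_one_sq_of_trace_of_det htr hdet
  exact ⟨genHenon_bogdanovTakens_fixedPoint hR hM hB hy₀, htr, hdet, hchar,
    fun _ => Matrix.eq_one_of_mem_spectrum_of_charpoly_eq hchar⟩
end

section
/- Let M, B, R ∈ ℝ with R ≠ −2. If (x, y) ∈ ℝ² is a fixed point of the generalized Hénon map H_{M,B,R} at which the 2×2 derivative matrix [[0, 1], [−B − R·y, −2y − R·x]] has trace 2 and determinant 1, then necessarily x = y = −1/(1 + R/2), B = 1 + R/(1 + R/2), and M = (−1 − R)/(1 + R/2)². In other words, for each fixed R ≠ −2 the Bogdanov–Takens point is the unique pair of parameters (M, B) for which H_{M,B,R} has a fixed point with a double eigenvalue +1. -/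
/-!
A fixed point of `H_{M,B,R}` lies on the diagonal, `x = y`. There the Jacobian has trace
`-(2 + R) y` and determinant `B + R y`, so trace `2` pins down `y = -2 / (2 + R)`, determinant
`1` gives `B = 1 - R y`, and the fixed-point equation then reduces to `M = 2 y + y²`.
-/

theorem genHenon_eq_self_iff {M B R x y : ℝ} :
    genHenon M B R (x, y) = (x, y) ↔ y = x ∧ M = x + B * x + x ^ 2 + R * x ^ 2 := by
  simp only [genHenon, Prod.mk.injEq]
  constructor
  · rintro ⟨rfl, hM⟩
    exact ⟨rfl, by linear_combination hM⟩
  · rintro ⟨rfl, hM⟩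
    exact ⟨rfl, by linear_combination hM⟩

theorem bogdanovTakens_values_of_mul_eq {R y : ℝ} (hy : y * (2 + R) = -2) :
    y = -1 / (1 + R / 2) ∧ 1 - R * y = 1 + R / (1 + R / 2) ∧
      2 * y + y ^ 2 = (-1 - R) / (1 + R / 2) ^ 2 := by
  have hR : 1 + R / 2 ≠ 0 := by
    intro h
    have h2R : 2 + R = 0 := by linarith
    simp [h2R] at hy
  have hy' : y = -1 / (1 + R / 2) := by
    rw [eq_div_iff hR]
    linarith
  refine ⟨hy', ?_, ?_⟩ <;> rw [hy'] <;> field_simp <;> ring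

theorem genHenon_bogdanovTakens_unique_general (M B R x y : ℝ)
    (hfix : genHenon M B R (x, y) = (x, y))
    (htrace : Matrix.trace !![0, 1; -B - R * y, -2 * y - R * x] = 2)
    (hdet : Matrix.det !![0, 1; -B - R * y, -2 * y - R * x] = 1) :
    x = -1 / (1 + R / 2) ∧ y = -1 / (1 + R / 2) ∧
    B = 1 + R / (1 + R / 2) ∧ M = (-1 - R) / (1 + R / 2) ^ 2 := by
  obtain ⟨rfl, hM⟩ := genHenon_eq_self_iff.1 hfix
  rw [Matrix.trace_fin_two_of] at htrace
  rw [Matrix.det_fin_two_of] at hdet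
  obtain ⟨hy, hB, hM'⟩ := bogdanovTakens_values_of_mul_eq (by linarith : y * (2 + R) = -2)
  have hB_eq : B = 1 - R * y := by linarith
  refine ⟨hy, hy, hB_eq.trans hB, ?_⟩
  rw [← hM', hM, hB_eq]
  ring

/-- If `(x, y)` is a fixed point of `H_{M,B,R}` (with `R ≠ −2`) at which the derivative
matrix `[[0, 1], [−B − R·y, −2y − R·x]]` has trace `2` and determinant `1`, then
`x = y = −1/(1+R/2)`, `B = 1 + R/(1+R/2)` and `M = (−1−R)/(1+R/2)²`: the
Bogdanov–Takens point is the unique parameter pair `(M, B)` for which `H_{M,B,R}`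
has a fixed point with a double eigenvalue `+1`. -/
theorem genHenon_bogdanovTakens_unique (M B R x y : ℝ) (hR : R ≠ -2)
    (hfix : genHenon M B R (x, y) = (x, y))
    (htrace : Matrix.trace !![0, 1; -B - R * y, -2 * y - R * x] = 2)
    (hdet : Matrix.det !![0, 1; -B - R * y, -2 * y - R * x] = 1) :
    x = -1 / (1 + R / 2) ∧ y = -1 / (1 + R / 2) ∧
    B = 1 + R / (1 + R / 2) ∧ M = (-1 - R) / (1 + R / 2) ^ 2 :=
  genHenon_bogdanovTakens_unique_general M B R x y hfix htrace hdet
end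

section
/- Let (X, d) be a compact metric space, f : X → X a continuous map, and D ⊆ X a nonempty set such that diam(fⁿ(D)) → 0 as n → ∞. Then for any two points x, y ∈ D, the sequence of empirical measures μ_n^x = (1/n)·∑_{i=0}^{n−1} δ_{fⁱ(x)} converges in the weak* topology if and only if the sequence μ_n^y = (1/n)·∑_{i=0}^{n−1} δ_{fⁱ(y)} converges, and in that case the two limits coincide. In particular, x has historic behavior if and only if y has historic behavior. -/
open Filter Topology MeasureTheory ENNReal

/-!
Points of `D` are forward asymptotic, so a uniformly continuous observable takes
asymptotically equal values along their orbits; Cesàro averaging preserves this, hence the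
integrals of every bounded continuous function against the two sequences of empirical
measures differ by a null sequence, and the two sequences have the same weak* limits.
-/

/-- The `n`-th empirical measure `μ_n^x = (1/n)·∑_{i=0}^{n-1} δ_{fⁱ(x)}` (for `n ≥ 1`,
indexed here so that `empiricalMeasure f x n` is `μ_{n+1}^x`) along the orbit of `x`
under `f`, as a Borel probability measure; weak* convergence of the sequence of
empirical measures is convergence in the topology of `MeasureTheory.ProbabilityMeasure`. -/
noncomputable def empiricalMeasure {X : Type*} [MeasurableSpace X] (f : X → X) (x : X)
    (n : ℕ) : ProbabilityMeasure X :=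
  ⟨((n + 1 : ℝ≥0∞))⁻¹ • ∑ i ∈ Finset.range (n + 1), Measure.dirac (f^[i] x), by
    constructor
    simp [Measure.smul_apply, Measure.finset_sum_apply, smul_eq_mul]
    rw [ENNReal.inv_mul_cancel (by simp) (by simp)]⟩

open BoundedContinuousFunction

theorem tendsto_dist_iterate_of_diam_tendsto_zero {X : Type*} [PseudoMetricSpace X]
    [BoundedSpace X] {f : X → X} {D : Set X}
    (hdiam : Tendsto (fun n : ℕ => Metric.diam (f^[n] '' D)) atTop (𝓝 0))
    {x y : X} (hx : x ∈ D) (hy : y ∈ D) :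
    Tendsto (fun n : ℕ => dist (f^[n] x) (f^[n] y)) atTop (𝓝 0) :=
  squeeze_zero (fun _ => dist_nonneg)
    (fun _ => Metric.dist_le_diam_of_mem (Bornology.IsBounded.all _)
      (Set.mem_image_of_mem _ hx) (Set.mem_image_of_mem _ hy)) hdiam

theorem UniformContinuous.tendsto_dist_comp {α β ι : Type*} [PseudoMetricSpace α]
    [PseudoMetricSpace β] {g : α → β} (hg : UniformContinuous g) {l : Filter ι}
    {u v : ι → α} (huv : Tendsto (fun i => dist (u i) (v i)) l (𝓝 0)) :
    Tendsto (fun i => dist (g (u i)) (g (v i))) l (𝓝 0) :=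
  tendsto_uniformity_iff_dist_tendsto_zero.mp <|
    Tendsto.comp hg (tendsto_uniformity_iff_dist_tendsto_zero (f := fun i => (u i, v i)).mpr huv)

theorem integral_empiricalMeasure {X : Type*} [TopologicalSpace X] [MeasurableSpace X]
    [OpensMeasurableSpace X] (f : X → X) (x : X) (n : ℕ) (g : X →ᵇ ℝ) :
    ∫ z, g z ∂(empiricalMeasure f x n : Measure X)
      = ((n : ℝ) + 1)⁻¹ * ∑ i ∈ Finset.range (n + 1), g (f^[i] x) := by
  change ∫ z, g z ∂(((n + 1 : ℝ≥0∞))⁻¹ • ∑ i ∈ Finset.range (n + 1),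
    Measure.dirac (f^[i] x)) = _
  rw [integral_smul_measure, integral_finsetSum_measure fun i _ => g.integrable _]
  simp only [integral_dirac' _ _ g.continuous.stronglyMeasurable, smul_eq_mul, toReal_inv]
  norm_cast

theorem tendsto_integral_empiricalMeasure_sub {X : Type*} [PseudoMetricSpace X] [MeasurableSpace X]
    [OpensMeasurableSpace X] {f : X → X} {x y : X}
    (hxy : Tendsto (fun n : ℕ => dist (f^[n] x) (f^[n] y)) atTop (𝓝 0))
    {g : X →ᵇ ℝ} (hg : UniformContinuous g) :
    Tendsto (fun n => ∫ z, g z ∂(empiricalMeasure f y n : Measure X) -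
      ∫ z, g z ∂(empiricalMeasure f x n : Measure X)) atTop (𝓝 0) := by
  have hdiff : Tendsto (fun i : ℕ => g (f^[i] y) - g (f^[i] x)) atTop (𝓝 0) := by
    rw [tendsto_zero_iff_abs_tendsto_zero]
    simpa [Function.comp_def, Real.dist_eq, abs_sub_comm] using hg.tendsto_dist_comp hxy
  refine (hdiff.cesaro.comp (tendsto_add_atTop_nat 1)).congr fun n => ?_
  simp only [Function.comp_apply, integral_empiricalMeasure, Finset.sum_sub_distrib]
  push_cast
  ring

theorem tendsto_empiricalMeasure_iff_of_tendsto_dist_iterate {X : Type*} [MetricSpace X]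
    [CompactSpace X] [MeasurableSpace X] [BorelSpace X] {f : X → X} {x y : X}
    (hxy : Tendsto (fun n : ℕ => dist (f^[n] x) (f^[n] y)) atTop (𝓝 0))
    (ν : ProbabilityMeasure X) :
    Tendsto (empiricalMeasure f x) atTop (𝓝 ν) ↔ Tendsto (empiricalMeasure f y) atTop (𝓝 ν) := by
  simp only [ProbabilityMeasure.tendsto_iff_forall_integral_tendsto]
  refine forall_congr' fun g => ⟨fun hx => ?_, fun hy => ?_⟩
  · simpa using hx.add (tendsto_integral_empiricalMeasure_sub hxy
      (CompactSpace.uniformContinuous_of_continuous g.continuous))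
  · simpa using hy.sub (tendsto_integral_empiricalMeasure_sub hxy
      (CompactSpace.uniformContinuous_of_continuous g.continuous))

theorem empiricalMeasure_tendsto_iff_of_diam_tendsto_zero_general {X : Type*} [MetricSpace X]
    [CompactSpace X] [MeasurableSpace X] [BorelSpace X]
    (f : X → X) (D : Set X)
    (hdiam : Tendsto (fun n : ℕ => Metric.diam (f^[n] '' D)) atTop (𝓝 0)) :
    ∀ x ∈ D, ∀ y ∈ D,
      ((∃ ν : ProbabilityMeasure X, Tendsto (empiricalMeasure f x) atTop (𝓝 ν)) ↔
        (∃ ν : ProbabilityMeasure X, Tendsto (empiricalMeasure f y) atTop (𝓝 ν))) ∧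
      (∀ νx νy : ProbabilityMeasure X,
        Tendsto (empiricalMeasure f x) atTop (𝓝 νx) →
        Tendsto (empiricalMeasure f y) atTop (𝓝 νy) → νx = νy) := by
  intro x hx y hy
  have same_limits := tendsto_empiricalMeasure_iff_of_tendsto_dist_iterate
    (tendsto_dist_iterate_of_diam_tendsto_zero hdiam hx hy)
  exact ⟨exists_congr same_limits,
    fun νx νy hνx hνy => tendsto_nhds_unique ((same_limits νx).mp hνx) hνy⟩

/-- Let `X` be a compact metric space, `f : X → X` continuous, and `D ⊆ X` a nonempty
set with `diam(fⁿ(D)) → 0`.  Then for `x, y ∈ D`, the sequence of empirical measures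
of `x` converges in the weak* topology iff that of `y` does, and in that case the two
limits coincide.  In particular, `x` has historic behavior iff `y` does. -/
theorem empiricalMeasure_tendsto_iff_of_diam_tendsto_zero {X : Type*} [MetricSpace X]
    [CompactSpace X] [MeasurableSpace X] [BorelSpace X]
    (f : X → X) (hf : Continuous f) (D : Set X) (hD : D.Nonempty)
    (hdiam : Tendsto (fun n : ℕ => Metric.diam (f^[n] '' D)) atTop (𝓝 0)) :
    ∀ x ∈ D, ∀ y ∈ D,
      ((∃ ν : ProbabilityMeasure X, Tendsto (empiricalMeasure f x) atTop (𝓝 ν)) ↔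
        (∃ ν : ProbabilityMeasure X, Tendsto (empiricalMeasure f y) atTop (𝓝 ν))) ∧
      (∀ νx νy : ProbabilityMeasure X,
        Tendsto (empiricalMeasure f x) atTop (𝓝 νx) →
        Tendsto (empiricalMeasure f y) atTop (𝓝 νy) → νx = νy) :=
  empiricalMeasure_tendsto_iff_of_diam_tendsto_zero_general f D hdiam
end
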